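/- arXiv:2307.06112 — 5 statements merged into one kernel-verified Lean document; each statement's English description precedes it below -/
import Mathlib

section
/- Let G be a group, F a field, and K a nonzero homogeneous left ideal of the free G-graded associative algebra F⟨X|G⟩. Then K does not satisfy any nonzero G-graded polynomial identity; i.e., for every nonzero multilinear graded polynomial f(x₁^{(g₁)},…,x_n^{(g_n)}) there are homogeneous elements of K of degrees g₁,…,g_n on which f does not vanish. -/
/-- The free `G`-graded associative algebra on countably many variables of each degree,
modelled as the monoid algebra of the free monoid on the variables `(i, g)` (of degree `g`);
a monomial (word) has degree the product of the degrees of its letters. -/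
abbrev FreeGradedAlg (F G : Type) [Field F] [Group G] : Type :=
  MonoidAlgebra F (FreeMonoid (ℕ × G))

/-- The degree of a word: the product of the degrees of its letters. -/
def wordDeg {G : Type} [Group G] : FreeMonoid (ℕ × G) →* G :=
  FreeMonoid.lift (fun p : ℕ × G => p.2)

/-- The homogeneous component of degree `g` of the free graded algebra: the span of the
words of degree `g`. -/
noncomputable def freeComponent (F : Type) {G : Type} [Field F] [Group G] (g : G) :
    Submodule F (FreeGradedAlg F G) :=
  MonoidAlgebra.supported F F {w : FreeMonoid (ℕ × G) | wordDeg w = g}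

/-!
Choose a nonzero homogeneous `w ∈ K` of degree `g` and substitute
`x_(i, h) ↦ x_(i + N, h g⁻¹) * w`, where `N` exceeds the index of every variable occurring
in `w`. These values lie in the left ideal `K` and have the prescribed degrees. The
substitution is injective: the endomorphism of the free monoid sending `x_(i + N, h)` to
`x_(i, h g)` and erasing the letters of index `< N` maps every word in the support of the image
of a monomial `m` back to `m`. So distinct monomials have images with disjoint supports, and
these images are nonzero because the free algebra is a domain.
-/

namespace MonoidAlgebra

variable {k M N : Type*}

section CommSemiring

variable [CommSemiring k]

theorem single_mem_supported_preimage (D : M → N) (a : M) (r : k) :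
    single a r ∈ supported k k (D ⁻¹' {D a}) := by
  classical
  rw [mem_supported, coeff_single]
  intro t ht
  rw [Finset.mem_singleton.mp (Finsupp.support_single_subset ht)]
  rfl

theorem mul_mem_supported_preimage [Monoid M] [Monoid N] (D : M →* N) {x y : k[M]} {m n : N}
    (hx : x ∈ supported k k (D ⁻¹' {m})) (hy : y ∈ supported k k (D ⁻¹' {n})) :
    x * y ∈ supported k k (D ⁻¹' {m * n}) := by
  classical
  intro t ht
  obtain ⟨a, ha, b, hb, rfl⟩ := Finset.mem_mul.mp (support_coeff_mul_subset x y ht)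
  simp only [Set.mem_preimage, Set.mem_singleton_iff, map_mul]
  rw [hx ha, hy hb]

end CommSemiring

theorem lift_injective_of_mem_supported_preimage [CommRing k] [NoZeroDivisors k]
    [Monoid M] [Monoid N] (φ : N →* k[M]) (D : M → N)
    (hφ : ∀ n, φ n ∈ supported k k (D ⁻¹' {n})) (hφ0 : ∀ n, φ n ≠ 0) :
    Function.Injective (lift k k[M] N φ) := by
  rw [injective_iff_map_eq_zero]
  intro q hq
  by_contra hq0
  obtain ⟨n, hn⟩ := Finsupp.support_nonempty_iff.mpr (mt coeff_eq_zero.mp hq0)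
  obtain ⟨t, ht⟩ := Finsupp.support_nonempty_iff.mpr (mt coeff_eq_zero.mp (hφ0 n))
  have hDt : D t = n := hφ n ht
  have hcoeff : (lift k k[M] N φ q).coeff t = q.coeff n * (φ n).coeff t := by
    rw [lift_apply, Finsupp.sum, coeff_sum, Finsupp.finsetSum_apply,
      Finset.sum_eq_single_of_mem n hn]
    · rfl
    · intro a _ hna
      have ht_notMem : t ∉ D ⁻¹' {a} := by simpa [hDt] using hna.symm
      rw [coeff_smul, Finsupp.smul_apply, (mem_supported' ..).mp (hφ a) t ht_notMem, smul_zero]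
  rw [hq] at hcoeff
  exact mul_ne_zero (Finsupp.mem_support_iff.mp hn) (Finsupp.mem_support_iff.mp ht) hcoeff.symm

end MonoidAlgebra

namespace FreeMonoid

theorem lift_mem_supported_preimage {k M α : Type*} [CommSemiring k] [Monoid M]
    (D : M →* FreeMonoid α) (v : α → MonoidAlgebra k M)
    (hv : ∀ a, v a ∈ MonoidAlgebra.supported k k (D ⁻¹' {of a})) (m : FreeMonoid α) :
    lift v m ∈ MonoidAlgebra.supported k k (D ⁻¹' {m}) := by
  induction m using FreeMonoid.inductionOn' with
  | one =>
    simpa [MonoidAlgebra.one_def] using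
      MonoidAlgebra.single_mem_supported_preimage (k := k) D 1 1
  | of_mul a m ih =>
    rw [map_mul, lift_eval_of]
    exact MonoidAlgebra.mul_mem_supported_preimage D (hv a) ih

theorem exists_fst_lt_of_mem_toList {α : Type*} (s : Finset (FreeMonoid (ℕ × α))) :
    ∃ N, ∀ t ∈ s, ∀ a ∈ t.toList, a.1 < N := by
  classical
  obtain ⟨N, hN⟩ :=
    (s.biUnion fun t => (t.toList.map Prod.fst).toFinset).exists_nat_subset_range
  refine ⟨N, fun t ht a ha => Finset.mem_range.mp (hN ?_)⟩
  exact Finset.mem_biUnion.mpr ⟨t, ht, List.mem_toFinset.mpr (List.mem_map_of_mem ha)⟩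

end FreeMonoid

namespace FreeAlgebra

theorem lift_injective_of_monoidAlgebra_lift_injective {R X A : Type*} [CommSemiring R]
    [Semiring A] [Algebra R A] (v : X → A)
    (h : Function.Injective (MonoidAlgebra.lift R A (FreeMonoid X) (FreeMonoid.lift v))) :
    Function.Injective (lift R v) := by
  have : lift R v = (MonoidAlgebra.lift R A (FreeMonoid X) (FreeMonoid.lift v)).comp
      (equivMonoidAlgebraFreeMonoid : FreeAlgebra R X ≃ₐ[R] _).toAlgHom := by
    ext x
    simp [equivMonoidAlgebraFreeMonoid]
  rw [this]
  exact h.comp equivMonoidAlgebraFreeMonoid.injective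

variable {k : Type*} [CommRing k] [IsDomain k]

theorem lift_single_mul_injective {X Y : Type*} (σ : X → Y)
    {w : MonoidAlgebra k (FreeMonoid Y)} (hw0 : w ≠ 0) (D : FreeMonoid Y →* FreeMonoid X)
    (hDσ : ∀ p, D (.of (σ p)) = .of p)
    (hDw : w ∈ MonoidAlgebra.supported k k (D ⁻¹' {1})) :
    Function.Injective (lift k fun p => MonoidAlgebra.single (FreeMonoid.of (σ p)) 1 * w) := by
  refine lift_injective_of_monoidAlgebra_lift_injective _ <|
    MonoidAlgebra.lift_injective_of_mem_supported_preimage _ D ?_ ?_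
  · refine FreeMonoid.lift_mem_supported_preimage D _ fun p => ?_
    simpa [hDσ] using MonoidAlgebra.mul_mem_supported_preimage D
      (MonoidAlgebra.single_mem_supported_preimage D (.of (σ p)) 1) hDw
  · intro m
    rw [FreeMonoid.lift_apply]
    refine List.prod_ne_zero fun h => ?_
    obtain ⟨p, -, hp⟩ := List.mem_map.mp h
    exact mul_ne_zero (by simp) hw0 hp

theorem exists_lift_shift_mul_injective {α : Type*} (e : α ≃ α)
    {w : MonoidAlgebra k (FreeMonoid (ℕ × α))} (hw0 : w ≠ 0) :
    ∃ N : ℕ, Function.Injective (lift k fun p : ℕ × α =>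
      MonoidAlgebra.single (FreeMonoid.of (p.1 + N, e p.2)) 1 * w) := by
  obtain ⟨N, hN⟩ := FreeMonoid.exists_fst_lt_of_mem_toList w.coeff.support
  let D : FreeMonoid (ℕ × α) →* FreeMonoid (ℕ × α) :=
    FreeMonoid.lift fun a => if N ≤ a.1 then .of (a.1 - N, e.symm a.2) else 1
  have hDσ : ∀ p : ℕ × α, D (.of (p.1 + N, e p.2)) = .of p := fun p => by simp [D]
  have hDw : w ∈ MonoidAlgebra.supported k k (D ⁻¹' {1}) := by
    rw [MonoidAlgebra.mem_supported]
    intro t ht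
    rw [Set.mem_preimage, Set.mem_singleton_iff, FreeMonoid.lift_apply]
    refine List.prod_eq_one fun x hx => ?_
    obtain ⟨a, ha, rfl⟩ := List.mem_map.mp hx
    simp [hN t ht a ha]
  exact ⟨N, lift_single_mul_injective (fun p : ℕ × α => (p.1 + N, e p.2)) hw0 D hDσ hDw⟩

end FreeAlgebra

theorem single_mul_mem_freeComponent {F G : Type} [Field F] [Group G] {w : FreeGradedAlg F G}
    {g : G} (hw : w ∈ freeComponent F g) (a : ℕ × G) (r : F) :
    MonoidAlgebra.single (FreeMonoid.of a) r * w ∈ freeComponent F (a.2 * g) := by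
  have h := MonoidAlgebra.mul_mem_supported_preimage wordDeg
    (MonoidAlgebra.single_mem_supported_preimage wordDeg (FreeMonoid.of a) r) hw
  rwa [wordDeg, FreeMonoid.lift_eval_of] at h

/-- a nonzero homogeneous left ideal `K` of the free `G`-graded associative
algebra satisfies no nonzero graded polynomial identity: for every nonzero graded polynomial
`f` (in particular every nonzero multilinear one, modelled in `FreeAlgebra F (ℕ × G)` with
the variable `(i,g)` of degree `g`) there is a graded substitution by homogeneous elements of
`K` of the matching degrees on which `f` does not vanish. -/
theorem stmt3 {F : Type} [Field F] {G : Type} [Group G]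
    (K : Submodule F (FreeGradedAlg F G))
    (hKleft : ∀ a : FreeGradedAlg F G, ∀ x ∈ K, a * x ∈ K)
    (hKhom : K = ⨆ g : G, K ⊓ freeComponent F g)
    (hKne : K ≠ ⊥)
    (f : FreeAlgebra F (ℕ × G)) (hf : f ≠ 0) :
    ¬ (∀ v : ℕ × G → FreeGradedAlg F G,
        (∀ p : ℕ × G, v p ∈ K) → (∀ p : ℕ × G, v p ∈ freeComponent F p.2) →
        FreeAlgebra.lift F v f = 0) := by
  intro hid
  obtain ⟨g, hg⟩ : ∃ g, K ⊓ freeComponent F g ≠ ⊥ := by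
    by_contra! h
    exact hKne (hKhom.trans (by simp [h]))
  obtain ⟨w, ⟨hwK, hwg⟩, hw0⟩ := Submodule.exists_mem_ne_zero_of_ne_bot hg
  obtain ⟨N, hinj⟩ := FreeAlgebra.exists_lift_shift_mul_injective (Equiv.mulRight g⁻¹) hw0
  refine hf (hinj ((hid _ (fun p => hKleft _ w hwK) fun p => ?_).trans (map_zero _).symm))
  simpa using single_mul_mem_freeComponent hwg (p.1 + N, (Equiv.mulRight g⁻¹) p.2) 1
end

section
/- Let G be a group and A a G-graded F-algebra with A = B + C, where B is a nonzero homogeneous (two-sided) ideal of A and C is a homogeneous subalgebra of A. If both B and C satisfy graded polynomial identities, then A satisfies a graded polynomial identity. -/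
section

variable (F : Type) [Field F] (G : Type) [Group G]
variable {A : Type} [Ring A] [Algebra F A]

/-- `𝒜` is a `G`-grading of the `F`-algebra `A`. -/
def IsGrading (𝒜 : G → Submodule F A) : Prop :=
  (∀ g h : G, ∀ x ∈ 𝒜 g, ∀ y ∈ 𝒜 h, x * y ∈ 𝒜 (g * h)) ∧
    (⨆ g, 𝒜 g) = ⊤ ∧ iSupIndep 𝒜

/-- The subset `S` of the `G`-graded algebra `(A, 𝒜)` satisfies a nonzero graded polynomial
identity (identities modelled in `FreeAlgebra F (ℕ × G)`, variable `(i,g)` of degree `g`,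
substitutions by homogeneous elements of `S` of matching degrees). -/
def GrPIOn (𝒜 : G → Submodule F A) (S : Submodule F A) : Prop :=
  ∃ f : FreeAlgebra F (ℕ × G), f ≠ 0 ∧ ∀ v : ℕ × G → A,
    (∀ p : ℕ × G, v p ∈ S) → (∀ p : ℕ × G, v p ∈ 𝒜 p.2) →
      FreeAlgebra.lift F v f = 0

end

/-!
Let `f_B`, `f_C` be nonzero graded identities of `B` and `C`. Because `B` is an ideal and
`A = B + C` with both summands homogeneous, every homogeneous element of `A` is congruent modulo
`B` to a homogeneous element of `C` of the same degree, so `f_C` takes values in `B` on all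
homogeneous substitutions from `A`. The homogeneous components of a graded identity are again
graded identities (their values lie in independent components), so `f_C` may be taken
homogeneous, of some degree `g`.

Now substitute `h * y_p` for each variable `x_p` of `f_B`, where `h` is a copy of `f_C` in fresh
variables and `y_p` is a fresh variable of degree `g⁻¹ * deg x_p`. Every value of `h * y_p` lies in
`B` and has degree `deg x_p`, so the result is a graded identity of `A`. It is nonzero because
the substitution `x_p ↦ h * y_p` is injective: the letters `y_p` cut the words of
`h * y_{p₁} ⋯ h * y_{pₙ}` uniquely into codewords.
-/

section Decomposition

variable {F A ι : Type*} [CommRing F] [Ring A] [Algebra F A]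

theorem exists_mem_inf_sub_mem_of_iSupIndep {𝒜 : ι → Submodule F A} (hind : iSupIndep 𝒜)
    {B C : Submodule F A} (hB : B = ⨆ i, B ⊓ 𝒜 i) (hC : C = ⨆ i, C ⊓ 𝒜 i)
    {k : ι} {a : A} (ha : a ∈ 𝒜 k) (haBC : a ∈ B ⊔ C) :
    ∃ c ∈ C ⊓ 𝒜 k, a - c ∈ B := by
  classical
  obtain ⟨b, hb, c, hc, rfl⟩ := Submodule.mem_sup.mp haBC
  rw [hB, Submodule.mem_iSup_iff_exists_finsupp] at hb
  rw [hC, Submodule.mem_iSup_iff_exists_finsupp] at hc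
  obtain ⟨fb, hfb, rfl⟩ := hb
  obtain ⟨fc, hfc, rfl⟩ := hc
  set s := insert k (fb.support ∪ fc.support)
  have hfb_sum : ∑ i ∈ s, fb i = fb.sum fun _ x => x := (Finsupp.sum_of_support_subset fb
    (Finset.subset_union_left.trans (Finset.subset_insert _ _)) (fun _ x => x) fun _ _ => rfl).symm
  have hfc_sum : ∑ i ∈ s, fc i = fc.sum fun _ x => x := (Finsupp.sum_of_support_subset fc
    (Finset.subset_union_right.trans (Finset.subset_insert _ _)) (fun _ x => x) fun _ _ => rfl).symm
  have hsum : ∑ i ∈ s, (fb i + fc i) =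
      ∑ i ∈ s, Pi.single k ((fb.sum fun _ x => x) + fc.sum fun _ x => x) i := by
    rw [Finset.sum_pi_single' k _ s, if_pos (Finset.mem_insert_self k _), Finset.sum_add_distrib,
      hfb_sum, hfc_sum]
  have hk := (iSupIndep_iff_finsetSum_eq_imp_eq 𝒜).mp hind s _ _
    (fun i _ => ⟨add_mem (hfb i).2 (hfc i).2, ?_⟩) hsum k (Finset.mem_insert_self k _)
  · refine ⟨fc k, hfc k, ?_⟩
    rw [Pi.single_eq_same] at hk
    rw [← hk, add_sub_cancel_right]
    exact (hfb k).1
  · rcases eq_or_ne i k with rfl | hik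
    · rw [Pi.single_eq_same]; exact ha
    · rw [Pi.single_eq_of_ne hik]; exact zero_mem _

end Decomposition

namespace FreeAlgebra

variable {F X Y A : Type*} [CommRing F] [Ring A] [Algebra F A]

theorem lift_sub_lift_mem {B : Submodule F A} (hB : ∀ a : A, ∀ x ∈ B, a * x ∈ B ∧ x * a ∈ B)
    {u v : X → A} (huv : ∀ x, u x - v x ∈ B) (f : FreeAlgebra F X) :
    lift F u f - lift F v f ∈ B := by
  induction f using FreeAlgebra.induction with
  | grade0 r => simp
  | grade1 x => simpa using huv x
  | mul f g hf hg =>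
    rw [map_mul, map_mul, show lift F u f * lift F u g - lift F v f * lift F v g =
      lift F u f * (lift F u g - lift F v g) + (lift F u f - lift F v f) * lift F v g by
        noncomm_ring]
    exact add_mem (hB _ _ hg).1 (hB _ _ hf).2
  | add f g hf hg =>
    rw [map_add, map_add, add_sub_add_comm]
    exact add_mem hf hg

theorem lift_lift (u : X → FreeAlgebra F Y) (v : Y → A) (f : FreeAlgebra F X) :
    lift F v (lift F u f) = lift F (fun x => lift F v (u x)) f := by
  rw [← AlgHom.comp_apply]
  congr 1
  ext
  simp

theorem lift_eq_sum_coeff (v : X → A) (f : FreeAlgebra F X) :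
    lift F v f = (equivMonoidAlgebraFreeMonoid f).coeff.sum
      fun w r => r • FreeMonoid.lift v w := by
  have : lift F v = (MonoidAlgebra.lift F A _ (FreeMonoid.lift v)).comp
      equivMonoidAlgebraFreeMonoid.toAlgHom := by
    ext; simp [equivMonoidAlgebraFreeMonoid]
  rw [this, AlgHom.comp_apply, MonoidAlgebra.lift_apply]
  rfl

theorem lift_zero_eq_coeff_one_smul (f : FreeAlgebra F X) :
    lift F (0 : X → A) f = (equivMonoidAlgebraFreeMonoid f).coeff 1 • 1 := by
  rw [lift_eq_sum_coeff, Finsupp.sum_eq_single 1 (fun w _ hw => ?_) (by simp)]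
  · simp
  · cases w with
    | one => exact absurd rfl hw
    | of_mul x w => simp

theorem exists_coeff_ne_zero {f : FreeAlgebra F X} (hf : f ≠ 0) :
    ∃ w, (equivMonoidAlgebraFreeMonoid f).coeff w ≠ 0 := by
  have : (equivMonoidAlgebraFreeMonoid f).coeff ≠ 0 := by simpa using hf
  exact Finsupp.ne_iff.mp this

noncomputable def mapDomain (κ : FreeMonoid X →* FreeMonoid Y) :
    FreeAlgebra F X →ₐ[F] FreeAlgebra F Y :=
  equivMonoidAlgebraFreeMonoid.symm.toAlgHom.comp
    ((MonoidAlgebra.mapDomainAlgHom F F κ).comp equivMonoidAlgebraFreeMonoid.toAlgHom)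

theorem mapDomain_ι (κ : FreeMonoid X →* FreeMonoid Y) (x : X) :
    mapDomain κ (ι F x) = FreeMonoid.lift (ι F) (κ (FreeMonoid.of x)) := by
  simp [mapDomain, equivMonoidAlgebraFreeMonoid]

theorem mapDomain_injective {κ : FreeMonoid X →* FreeMonoid Y}
    (hκ : Function.Injective κ) : Function.Injective (mapDomain (F := F) κ) :=
  equivMonoidAlgebraFreeMonoid.symm.injective.comp
    ((MonoidAlgebra.mapDomain_injective hκ).comp equivMonoidAlgebraFreeMonoid.injective)

theorem _root_.FreeMonoid.map_injective {e : X → Y} (he : Function.Injective e) :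
    Function.Injective (FreeMonoid.map e) := fun _ _ h =>
  FreeMonoid.toList.injective (List.map_injective_iff.mpr he (congrArg FreeMonoid.toList h))

theorem lift_ι_comp_injective {e : X → Y} (he : Function.Injective e) :
    Function.Injective (lift F (ι F ∘ e)) := by
  have : lift F (ι F ∘ e) = mapDomain (FreeMonoid.map e) := by
    ext x; simp [mapDomain_ι]
  rw [this]
  exact mapDomain_injective (FreeMonoid.map_injective he)

end FreeAlgebra

open FreeAlgebra

section HomogeneousComponent

open scoped Classical

variable {F X G A : Type*} [CommRing F] [Ring A] [Algebra F A]

def IsGradedIdentity (𝒜 : G → Submodule F A) (S : Submodule F A)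
    (f : FreeAlgebra F (X × G)) : Prop :=
  ∀ v : X × G → A, (∀ p, v p ∈ S) → (∀ p, v p ∈ 𝒜 p.2) → lift F v f = 0

theorem IsGradedIdentity.coeff_one_eq_zero (hF : Function.Injective (algebraMap F A))
    {𝒜 : G → Submodule F A} {S : Submodule F A} {f : FreeAlgebra F (X × G)}
    (hf : IsGradedIdentity 𝒜 S f) : (equivMonoidAlgebraFreeMonoid f).coeff 1 = 0 := by
  have := hf 0 (fun _ => S.zero_mem) (fun p => (𝒜 p.2).zero_mem)
  rw [lift_zero_eq_coeff_one_smul, ← Algebra.algebraMap_eq_smul_one] at this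
  exact hF (this.trans (map_zero _).symm)

theorem IsGradedIdentity.lift_mem {𝒜 : G → Submodule F A} (hind : iSupIndep 𝒜)
    {B C : Submodule F A} (hBideal : ∀ a : A, ∀ x ∈ B, a * x ∈ B ∧ x * a ∈ B)
    (hB : B = ⨆ g, B ⊓ 𝒜 g) (hC : C = ⨆ g, C ⊓ 𝒜 g) (hBC : B ⊔ C = ⊤)
    {f : FreeAlgebra F (X × G)} (hf : IsGradedIdentity 𝒜 C f)
    {v : X × G → A} (hv : ∀ p, v p ∈ 𝒜 p.2) : lift F v f ∈ B := by
  choose c hc hvc using fun p => exists_mem_inf_sub_mem_of_iSupIndep hind hB hC (hv p)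
    (by rw [hBC]; exact Submodule.mem_top)
  simpa [hf c (fun p => (hc p).1) (fun p => (hc p).2)] using lift_sub_lift_mem hBideal hvc f

variable [Monoid G]

def wordDegree : FreeMonoid (X × G) →* G := FreeMonoid.lift Prod.snd

theorem FreeMonoid.lift_mem_wordDegree {𝒜 : G → Submodule F A}
    (hmul : ∀ g h : G, ∀ x ∈ 𝒜 g, ∀ y ∈ 𝒜 h, x * y ∈ 𝒜 (g * h))
    {v : X × G → A} (hv : ∀ p, v p ∈ 𝒜 p.2) {w : FreeMonoid (X × G)} (hw : w ≠ 1) :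
    FreeMonoid.lift v w ∈ 𝒜 (wordDegree w) := by
  induction w using FreeMonoid.inductionOn' with
  | one => exact absurd rfl hw
  | of_mul p w ih =>
    rcases eq_or_ne w 1 with rfl | hw'
    · simpa [wordDegree] using hv p
    · rw [map_mul, map_mul, FreeMonoid.lift_eval_of]
      exact hmul _ _ _ (hv p) _ (ih hw')

noncomputable def homogeneousComponent (g : G) (f : FreeAlgebra F (X × G)) :
    FreeAlgebra F (X × G) :=
  equivMonoidAlgebraFreeMonoid.symm
    (.ofCoeff ((equivMonoidAlgebraFreeMonoid f).coeff.filter (wordDegree · = g)))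

theorem homogeneousComponent_ne_zero {f : FreeAlgebra F (X × G)} {w : FreeMonoid (X × G)}
    (hw : (equivMonoidAlgebraFreeMonoid f).coeff w ≠ 0) :
    homogeneousComponent (wordDegree w) f ≠ 0 := by
  intro h0
  apply hw
  simpa [homogeneousComponent] using
    congrArg (fun f => (equivMonoidAlgebraFreeMonoid f).coeff w) h0

theorem lift_homogeneousComponent (v : X × G → A) (g : G) (f : FreeAlgebra F (X × G)) :
    lift F v (homogeneousComponent g f) =
      ∑ w ∈ (equivMonoidAlgebraFreeMonoid f).coeff.support with wordDegree w = g,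
        (equivMonoidAlgebraFreeMonoid f).coeff w • FreeMonoid.lift v w := by
  rw [lift_eq_sum_coeff, homogeneousComponent, AlgEquiv.apply_symm_apply,
    MonoidAlgebra.coeff_ofCoeff, Finsupp.sum_filter_index, Finsupp.support_filter]

theorem lift_homogeneousComponent_mem {𝒜 : G → Submodule F A}
    (hmul : ∀ g h : G, ∀ x ∈ 𝒜 g, ∀ y ∈ 𝒜 h, x * y ∈ 𝒜 (g * h))
    {v : X × G → A} (hv : ∀ p, v p ∈ 𝒜 p.2) {f : FreeAlgebra F (X × G)}
    (hf : (equivMonoidAlgebraFreeMonoid f).coeff 1 = 0) (g : G) :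
    lift F v (homogeneousComponent g f) ∈ 𝒜 g := by
  rw [lift_homogeneousComponent]
  refine Submodule.sum_mem _ fun w hw => Submodule.smul_mem _ _ ?_
  obtain ⟨hsupp, rfl⟩ := Finset.mem_filter.mp hw
  refine FreeMonoid.lift_mem_wordDegree hmul hv ?_
  rintro rfl
  exact Finsupp.mem_support_iff.mp hsupp hf

theorem sum_lift_homogeneousComponent (v : X × G → A) (f : FreeAlgebra F (X × G))
    {s : Finset G} (hs : ∀ w ∈ (equivMonoidAlgebraFreeMonoid f).coeff.support, wordDegree w ∈ s) :
    ∑ g ∈ s, lift F v (homogeneousComponent g f) = lift F v f := by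
  simp_rw [lift_homogeneousComponent]
  rw [Finset.sum_fiberwise_of_maps_to hs, lift_eq_sum_coeff, Finsupp.sum]

theorem IsGradedIdentity.homogeneousComponent {𝒜 : G → Submodule F A}
    (hmul : ∀ g h : G, ∀ x ∈ 𝒜 g, ∀ y ∈ 𝒜 h, x * y ∈ 𝒜 (g * h)) (hind : iSupIndep 𝒜)
    {S : Submodule F A} {f : FreeAlgebra F (X × G)} (hf : IsGradedIdentity 𝒜 S f)
    (hf1 : (equivMonoidAlgebraFreeMonoid f).coeff 1 = 0) (g : G) :
    IsGradedIdentity 𝒜 S (homogeneousComponent g f) := by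
  intro v hvS hv
  set s := insert g ((equivMonoidAlgebraFreeMonoid f).coeff.support.image wordDegree)
  refine (iSupIndep_iff_finsetSum_eq_zero_imp_eq_zero 𝒜).mp hind s _
    (fun k _ => lift_homogeneousComponent_mem hmul hv hf1 k) ?_ g (Finset.mem_insert_self g _)
  rw [sum_lift_homogeneousComponent v f
    fun w hw => Finset.mem_insert_of_mem (Finset.mem_image_of_mem _ hw)]
  exact hf v hvS hv

end HomogeneousComponent

section Code

variable {Y Z : Type*}

theorem List.map_inl_append_inr_cons_inj {w w' : List Z} {p p' : Y} {r r' : List (Z ⊕ Y)} :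
    w.map Sum.inl ++ Sum.inr p :: r = w'.map Sum.inl ++ Sum.inr p' :: r' ↔
      w = w' ∧ p = p' ∧ r = r' := by
  induction w generalizing w' with
  | nil => cases w' <;> simp
  | cons a w ih => cases w' <;> simp [ih, and_assoc]

def separatedWord : FreeMonoid (Y × FreeMonoid Z) →* FreeMonoid (Z ⊕ Y) :=
  FreeMonoid.lift fun pw => FreeMonoid.map Sum.inl pw.2 * FreeMonoid.of (Sum.inr pw.1)

theorem separatedWord_injective :
    Function.Injective (separatedWord : FreeMonoid (Y × FreeMonoid Z) →* _) := by
  intro m m' h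
  induction m using FreeMonoid.inductionOn' generalizing m' with
  | one =>
    cases m' with
    | one => rfl
    | of_mul x m' => simpa [separatedWord] using congrArg FreeMonoid.toList h
  | of_mul x m ih =>
    cases m' with
    | one => simpa [separatedWord] using congrArg FreeMonoid.toList h
    | of_mul x' m' =>
      have := congrArg FreeMonoid.toList h
      simp only [separatedWord, map_mul, FreeMonoid.lift_eval_of, FreeMonoid.toList_mul,
        FreeMonoid.toList_map, FreeMonoid.toList_of, List.append_assoc, List.singleton_append,
        List.map_inl_append_inr_cons_inj, FreeMonoid.toList.injective.eq_iff] at this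
      obtain ⟨h2, h1, hm⟩ := this
      rw [Prod.ext h1 h2, ih hm]

/- `lift F σ` factors as the substitution `x_p ↦ ∑_w c_w • x_(p,w)`, which has the left inverse
`x_(p,w) ↦ [w = u] c_u⁻¹ • x_p`, followed by the injective map induced by `separatedWord`. -/
theorem FreeAlgebra.lift_lift_mul_ι_injective {F : Type*} [Field F] {h : FreeAlgebra F Z}
    (hh : h ≠ 0) :
    Function.Injective
      (lift F fun p : Y => lift F (ι F ∘ Sum.inl) h * ι F (Sum.inr p)) := by
  classical
  set c := (equivMonoidAlgebraFreeMonoid h).coeff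
  obtain ⟨u, hu⟩ := exists_coeff_ne_zero hh
  let τ : Y → FreeAlgebra F (Y × FreeMonoid Z) := fun p => c.sum fun w r => r • ι F (p, w)
  let π : FreeAlgebra F (Y × FreeMonoid Z) →ₐ[F] FreeAlgebra F Y :=
    lift F fun pw => if pw.2 = u then (c u)⁻¹ • ι F pw.1 else 0
  have hπ : Function.LeftInverse π (lift F τ) := by
    suffices π.comp (lift F τ) = AlgHom.id F _ from fun f => congrArg (· f) this
    ext p
    simp [τ, π, map_finsuppSum, c, hu]
  have hσ : (lift F fun p : Y => lift F (ι F ∘ Sum.inl) h * ι F (Sum.inr p)) =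
      (mapDomain separatedWord).comp (lift F τ) := by
    ext p
    simp only [Function.comp_apply, lift_ι_apply, AlgHom.comp_apply, τ, map_finsuppSum, map_smul,
      mapDomain_ι]
    rw [lift_eq_sum_coeff, Finsupp.sum_mul]
    simp [separatedWord, ← FreeMonoid.lift_of_comp_eq_map, FreeMonoid.hom_map_lift,
      Function.comp_def, c]
  rw [hσ]
  exact (mapDomain_injective separatedWord_injective).comp hπ.injective

end Code

theorem stmt5_general {F : Type} [Field F] {G : Type} [Group G]
    {A : Type} [Ring A] [Algebra F A] (𝒜 : G → Submodule F A)
    (hgr : IsGrading F G 𝒜)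
    (B C : Submodule F A)
    (hBideal : ∀ a : A, ∀ x ∈ B, a * x ∈ B ∧ x * a ∈ B)
    (hBhom : B = ⨆ g, B ⊓ 𝒜 g)
    (hChom : C = ⨆ g, C ⊓ 𝒜 g)
    (hsum : B ⊔ C = ⊤)
    (hBPI : GrPIOn F G 𝒜 B) (hCPI : GrPIOn F G 𝒜 C) :
    GrPIOn F G 𝒜 ⊤ := by
  obtain ⟨hmul, -, hind⟩ := hgr
  obtain ⟨fB, hfB0, hfB⟩ := hBPI
  obtain ⟨fC, hfC0, hfC : IsGradedIdentity 𝒜 C fC⟩ := hCPI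
  rcases subsingleton_or_nontrivial A with hA | hA
  · exact ⟨fB, hfB0, fun _ _ _ => Subsingleton.elim _ _⟩
  have hfC1 := hfC.coeff_one_eq_zero (algebraMap F A).injective
  obtain ⟨u, hu⟩ := exists_coeff_ne_zero hfC0
  set g := wordDegree u
  set h := homogeneousComponent g fC
  have hhC : IsGradedIdentity 𝒜 C h := hfC.homogeneousComponent hmul hind hfC1 g
  -- odd first coordinates for the variables of `h`, even ones for the new variables `y_p`
  let e : (ℕ × G) ⊕ (ℕ × G) → ℕ × G :=
    Sum.elim (fun q => (2 * q.1 + 1, q.2)) (fun p => (2 * p.1, g⁻¹ * p.2))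
  have he : e.Injective := by
    rintro (q | p) (q' | p') hqp <;> simp [e, Prod.ext_iff] at hqp ⊢ <;> omega
  refine ⟨lift F (ι F ∘ e) (lift F (fun p => lift F (ι F ∘ Sum.inl) h * ι F (Sum.inr p)) fB),
    (map_ne_zero_iff _ (lift_ι_comp_injective he)).mpr
      ((map_ne_zero_iff _ (lift_lift_mul_ι_injective (homogeneousComponent_ne_zero hu))).mpr
        hfB0), fun v _ hv => ?_⟩
  simp only [lift_lift, map_mul, lift_ι_apply, Function.comp_apply]
  have hvh : ∀ q, v (e (Sum.inl q)) ∈ 𝒜 q.2 := fun q => hv (e (Sum.inl q))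
  refine hfB _ (fun p => (hBideal _ _ (hhC.lift_mem hind hBideal hBhom hChom hsum hvh)).2)
    fun p => ?_
  simpa [e] using hmul _ _ _ (lift_homogeneousComponent_mem hmul hvh hfC1 g) _ (hv (e (Sum.inr p)))

/-- let `A` be a `G`-graded `F`-algebra with `A = B + C`, where `B` is a nonzero
homogeneous two-sided ideal and `C` a homogeneous subalgebra.  If both `B` and `C` satisfy
graded polynomial identities, then `A` satisfies a graded polynomial identity. -/
theorem stmt5 {F : Type} [Field F] {G : Type} [Group G]
    {A : Type} [Ring A] [Algebra F A] (𝒜 : G → Submodule F A)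
    (hgr : IsGrading F G 𝒜)
    (B C : Submodule F A)
    (hBideal : ∀ a : A, ∀ x ∈ B, a * x ∈ B ∧ x * a ∈ B)
    (hBne : B ≠ ⊥)
    (hBhom : B = ⨆ g, B ⊓ 𝒜 g)
    (hCsub : ∀ x ∈ C, ∀ y ∈ C, x * y ∈ C)
    (hChom : C = ⨆ g, C ⊓ 𝒜 g)
    (hsum : B ⊔ C = ⊤)
    (hBPI : GrPIOn F G 𝒜 B) (hCPI : GrPIOn F G 𝒜 C) :
    GrPIOn F G 𝒜 ⊤ :=
  stmt5_general 𝒜 hgr B C hBideal hBhom hChom hsum hBPI hCPI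
end

section
/- Let A be a G-graded algebra, B a homogeneous ideal of A satisfying an ordinary polynomial identity f(x₁,…,x_m), and C a homogeneous subalgebra of A with A = B + C, such that C satisfies a multilinear graded identity g(x₁^{(g₁)},…,x_n^{(g_n)}). Then A satisfies the graded identity f(g(x₁₁^{(g₁)},…,x₁ₙ^{(g_n)}),…,g(x_{m1}^{(g₁)},…,x_{mn}^{(g_n)})) obtained by substituting disjoint copies of g into f. -/
/-- Evaluation of the multilinear polynomial `∑_{σ ∈ Sₙ} c σ • x_{σ(1)} ⋯ x_{σ(n)}`
at the tuple `w`. -/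
noncomputable def evalMulti {F A : Type} [Field F] [Ring A] [Algebra F A] {n : ℕ}
    (c : Equiv.Perm (Fin n) → F) (w : Fin n → A) : A :=
  ∑ σ : Equiv.Perm (Fin n), c σ • (List.ofFn (fun i => w (σ i))).prod

/-!
Split every homogeneous entry `x ∈ A_g` as `b + u` with `b ∈ B_g`, `u ∈ C_g`; this is possible
because the homogeneous components of `B + C` are `B_g + C_g`, by the modular law. Modulo the
ideal `B` the value of `g` at the `x`'s equals its value at the `u`'s, which is `0`. So every
copy of `g` evaluates into `B`, and `f` vanishes there.
-/

section Lattice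

variable {α ι : Type*} [CompleteLattice α] [IsModularLattice α] {t : ι → α}

theorem iSupIndep.iSup_inf_eq_of_le (ht : iSupIndep t) {p : ι → α} (hp : ∀ i, p i ≤ t i)
    (j : ι) : (⨆ i, p i) ⊓ t j = p j := by
  have hrest : (⨆ (i) (_ : i ≠ j), p i) ⊓ t j = ⊥ :=
    ((ht j).symm.mono_left (iSup₂_mono fun i _ => hp i)).eq_bot
  rw [iSup_split_single p j, sup_inf_assoc_of_le _ (hp j), hrest, sup_bot_eq]

theorem iSupIndep.sup_inf_eq_of_homogeneous (ht : iSupIndep t) {b c : α}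
    (hb : b = ⨆ i, b ⊓ t i) (hc : c = ⨆ i, c ⊓ t i) (j : ι) :
    (b ⊔ c) ⊓ t j = b ⊓ t j ⊔ c ⊓ t j := by
  have hbc : b ⊔ c = ⨆ i, (b ⊓ t i ⊔ c ⊓ t i) := by
    rw [iSup_sup_eq, ← hb, ← hc]
  rw [hbc]
  exact ht.iSup_inf_eq_of_le (fun i => sup_le inf_le_right inf_le_right) j

end Lattice

theorem List.ofFn_prod_sub_mem {A : Type*} [Ring A] (B : AddSubgroup A)
    (hB : ∀ a : A, ∀ x ∈ B, a * x ∈ B ∧ x * a ∈ B) {k : ℕ} {v u : Fin k → A}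
    (hvu : ∀ i, v i - u i ∈ B) :
    (List.ofFn v).prod - (List.ofFn u).prod ∈ B := by
  induction k with
  | zero => simp
  | succ k ih =>
    simp only [List.ofFn_succ, List.prod_cons]
    have htail := ih (v := fun i => v i.succ) (u := fun i => u i.succ) fun i => hvu i.succ
    set P := (List.ofFn fun i => v i.succ).prod
    set Q := (List.ofFn fun i => u i.succ).prod
    have hsplit : v 0 * P - u 0 * Q = (v 0 - u 0) * P + u 0 * (P - Q) := by noncomm_ring
    rw [hsplit]
    exact B.add_mem (hB _ _ (hvu 0)).2 (hB _ _ htail).1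

theorem evalMulti_sub_mem {F A : Type} [Field F] [Ring A] [Algebra F A] (B : Submodule F A)
    (hB : ∀ a : A, ∀ x ∈ B, a * x ∈ B ∧ x * a ∈ B) {n : ℕ} (c : Equiv.Perm (Fin n) → F)
    {w u : Fin n → A}
    (hwu : ∀ j, w j - u j ∈ B) : evalMulti c w - evalMulti c u ∈ B := by
  rw [evalMulti, evalMulti, ← Finset.sum_sub_distrib]
  refine B.sum_mem fun σ _ => ?_
  rw [← smul_sub]
  exact B.smul_mem _ (List.ofFn_prod_sub_mem B.toAddSubgroup hB fun i => hwu (σ i))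

theorem stmt6_general {F : Type} [Field F] {G : Type}
    {A : Type} [Ring A] [Algebra F A] (𝒜 : G → Submodule F A)
    (hindep : iSupIndep 𝒜)
    (B C : Submodule F A)
    (hBideal : ∀ a : A, ∀ x ∈ B, a * x ∈ B ∧ x * a ∈ B)
    (hBhom : B = ⨆ g, B ⊓ 𝒜 g)
    (hChom : C = ⨆ g, C ⊓ 𝒜 g)
    (hsum : B ⊔ C = ⊤)
    {m n : ℕ}
    -- the ordinary polynomial identity `f` of `B`
    (f : FreeAlgebra F (Fin m))
    (hfB : ∀ v : Fin m → A, (∀ i, v i ∈ B) → FreeAlgebra.lift F v f = 0)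
    -- the multilinear graded identity `g` of `C`, with coefficients `c`
    -- and variable degrees `d`
    (c : Equiv.Perm (Fin n) → F) (d : Fin n → G)
    (hgC : ∀ w : Fin n → A, (∀ j, w j ∈ C) → (∀ j, w j ∈ 𝒜 (d j)) → evalMulti c w = 0) :
    ∀ w : Fin m → Fin n → A, (∀ i j, w i j ∈ 𝒜 (d j)) →
      FreeAlgebra.lift F (fun i => evalMulti c (w i)) f = 0 := by
  intro w hw
  refine hfB _ fun i => ?_
  have hsplit : ∀ j, w i j ∈ B ⊓ 𝒜 (d j) ⊔ C ⊓ 𝒜 (d j) := fun j => by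
    rw [← hindep.sup_inf_eq_of_homogeneous hBhom hChom, hsum, top_inf_eq]
    exact hw i j
  choose b hb u hu hbu using fun j => Submodule.mem_sup.1 (hsplit j)
  have hdiff := evalMulti_sub_mem B hBideal c (w := w i) (u := u) fun j => by
    rw [← hbu j, add_sub_cancel_right]
    exact (hb j).1
  rwa [hgC u (fun j => (hu j).1) (fun j => (hu j).2), sub_zero] at hdiff

/-- `A` a `G`-graded algebra, `A = B + C` with `B` a homogeneous ideal
satisfying the ordinary identity `f(x₁,…,x_m)` and `C` a homogeneous subalgebra satisfying
the multilinear graded identity `g(x₁^{(g₁)},…,x_n^{(g_n)})` (with coefficients `c` and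
degrees `d`).  Then `A` satisfies the graded identity
`f(g(x₁₁^{(g₁)},…,x₁ₙ^{(g_n)}),…,g(x_{m1}^{(g₁)},…,x_{mn}^{(g_n)}))` obtained by
substituting disjoint copies of `g` into `f`. -/
theorem stmt6 {F : Type} [Field F] {G : Type} [Group G]
    {A : Type} [Ring A] [Algebra F A] (𝒜 : G → Submodule F A)
    (hmul : ∀ g h : G, ∀ x ∈ 𝒜 g, ∀ y ∈ 𝒜 h, x * y ∈ 𝒜 (g * h))
    (htop : (⨆ g, 𝒜 g) = ⊤) (hindep : iSupIndep 𝒜)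
    (B C : Submodule F A)
    (hBideal : ∀ a : A, ∀ x ∈ B, a * x ∈ B ∧ x * a ∈ B)
    (hBhom : B = ⨆ g, B ⊓ 𝒜 g)
    (hCsub : ∀ x ∈ C, ∀ y ∈ C, x * y ∈ C)
    (hChom : C = ⨆ g, C ⊓ 𝒜 g)
    (hsum : B ⊔ C = ⊤)
    {m n : ℕ}
    -- the ordinary polynomial identity `f` of `B`
    (f : FreeAlgebra F (Fin m))
    (hfB : ∀ v : Fin m → A, (∀ i, v i ∈ B) → FreeAlgebra.lift F v f = 0)
    -- the multilinear graded identity `g` of `C`, with coefficients `c`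
    -- and variable degrees `d`
    (c : Equiv.Perm (Fin n) → F) (d : Fin n → G)
    (hgC : ∀ w : Fin n → A, (∀ j, w j ∈ C) → (∀ j, w j ∈ 𝒜 (d j)) → evalMulti c w = 0) :
    ∀ w : Fin m → Fin n → A, (∀ i j, w i j ∈ 𝒜 (d j)) →
      FreeAlgebra.lift F (fun i => evalMulti c (w i)) f = 0 :=
  stmt6_general 𝒜 hindep B C hBideal hBhom hChom hsum f hfB c d hgC
end

section
/- Let A be a G-graded algebra with A = B + C, where B is a homogeneous ideal satisfying a multilinear graded identity f(x₁^{(g₁)},…,x_m^{(g_m)}) and C is a homogeneous subalgebra satisfying an ordinary multilinear identity g(x₁,…,x_n). Then A satisfies the graded identity f(g(x₁₁^{(g₁)},x₁₂^{(1)},…,x₁ₙ^{(1)}),…,g(x_{m1}^{(g_m)},x_{m2}^{(1)},…,x_{mn}^{(1)})), where the inner substitutions use one variable of degree g_i and n−1 variables of neutral degree 1. -/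
/-! Write each argument of an inner copy of `g` as `b + c` with `b ∈ B`, `c ∈ C`
(possible since `A = B + C`) and expand by multilinearity: the term with all arguments in `C`
vanishes because `g` is an identity of `C`, and every other term has a factor in the ideal `B`.
So each inner value lies in `B`; it is also homogeneous of degree `gᵢ`, being a combination of
products of one element of degree `gᵢ` with elements of neutral degree. Hence the graded
identity `f` of `B` kills the outer evaluation. -/

theorem List.prod_ofFn_mulSingle {M : Type*} [Monoid M] {k : ℕ} (j : Fin k) (a : M) :
    (List.ofFn (Pi.mulSingle j a)).prod = a := by
  induction k with
  | zero => exact j.elim0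
  | succ k ih =>
    rw [List.ofFn_succ, List.prod_cons]
    cases j using Fin.cases with
    | zero => simp [Fin.succ_ne_zero]
    | succ j =>
      have htail :
          (fun i : Fin k => (Pi.mulSingle j.succ a : Fin (k + 1) → M) i.succ) =
            Pi.mulSingle j a := by
        ext i
        simp [Pi.mulSingle_apply]
      rw [htail, ih, Pi.mulSingle_eq_of_ne (Fin.succ_ne_zero j).symm, one_mul]

theorem list_prod_ofFn_mem_graded_of_mul_mem {G M S : Type*} [Monoid G] [Monoid M]
    [SetLike S M] (𝒜 : G → S)
    (hmul : ∀ g h : G, ∀ x ∈ 𝒜 g, ∀ y ∈ 𝒜 h, x * y ∈ 𝒜 (g * h)) {k : ℕ} (hk : 0 < k)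
    (x : Fin k → M) (δ : Fin k → G) (hx : ∀ j, x j ∈ 𝒜 (δ j)) :
    (List.ofFn x).prod ∈ 𝒜 (List.ofFn δ).prod := by
  induction k with
  | zero => omega
  | succ k ih =>
    rw [List.ofFn_succ, List.ofFn_succ, List.prod_cons, List.prod_cons]
    rcases Nat.eq_zero_or_pos k with rfl | hk
    · simpa using hx 0
    · exact hmul _ _ _ (hx 0) _ (ih hk _ _ fun j => hx j.succ)

theorem list_prod_mem_of_exists_mem {M S : Type*} [Monoid M] [SetLike S M] (B : S)
    (hB : ∀ a : M, ∀ x ∈ B, a * x ∈ B ∧ x * a ∈ B) :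
    ∀ l : List M, (∃ x ∈ l, x ∈ B) → l.prod ∈ B
  | [], ⟨_, hx, _⟩ => absurd hx List.not_mem_nil
  | y :: l, ⟨x, hx, hxB⟩ => by
    rw [List.prod_cons]
    rcases List.mem_cons.mp hx with rfl | hx
    · exact (hB _ _ hxB).2
    · exact (hB _ _ (list_prod_mem_of_exists_mem B hB l ⟨x, hx, hxB⟩)).1

section EvalMulti

variable {F A : Type} [Field F] [Ring A] [Algebra F A] {n : ℕ}

noncomputable def evalMultiMultilinearMap (c : Equiv.Perm (Fin n) → F) :
    MultilinearMap F (fun _ : Fin n => A) A :=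
  ∑ σ : Equiv.Perm (Fin n), c σ • (MultilinearMap.mkPiAlgebraFin F n A).domDomCongr σ

theorem evalMultiMultilinearMap_apply (c : Equiv.Perm (Fin n) → F) (w : Fin n → A) :
    evalMultiMultilinearMap c w = evalMulti c w := by
  simp [evalMultiMultilinearMap, evalMulti]

theorem evalMulti_mem {p : Submodule F A} (c : Equiv.Perm (Fin n) → F) (w : Fin n → A)
    (h : ∀ σ : Equiv.Perm (Fin n), (List.ofFn fun i => w (σ i)).prod ∈ p) :
    evalMulti c w ∈ p :=
  Submodule.sum_mem _ fun σ _ => p.smul_mem _ (h σ)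

theorem evalMulti_mem_graded {G : Type*} [Monoid G] (𝒜 : G → Submodule F A)
    (hmul : ∀ g h : G, ∀ x ∈ 𝒜 g, ∀ y ∈ 𝒜 h, x * y ∈ 𝒜 (g * h)) (hn : 0 < n)
    (c : Equiv.Perm (Fin n) → F) (w : Fin n → A) (j₀ : Fin n) (g : G) (hj₀ : w j₀ ∈ 𝒜 g)
    (hw : ∀ j, j ≠ j₀ → w j ∈ 𝒜 1) :
    evalMulti c w ∈ 𝒜 g := by
  classical
  have hwδ : ∀ j, w j ∈ 𝒜 ((Pi.mulSingle j₀ g : Fin n → G) j) := fun j => by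
    by_cases h : j = j₀
    · subst h; simpa using hj₀
    · simpa [h] using hw j h
  refine evalMulti_mem c w fun σ => ?_
  have hdeg : (List.ofFn fun i => (Pi.mulSingle j₀ g : Fin n → G) (σ i)).prod = g := by
    rw [← Function.comp_def, Pi.mulSingle_comp_equiv, List.prod_ofFn_mulSingle]
  exact hdeg ▸ list_prod_ofFn_mem_graded_of_mul_mem 𝒜 hmul hn _ _ fun i => hwδ (σ i)

theorem evalMulti_mem_of_forall_mem_sup {B C : Submodule F A}
    (hB : ∀ a : A, ∀ x ∈ B, a * x ∈ B ∧ x * a ∈ B) (e : Equiv.Perm (Fin n) → F)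
    (hgC : ∀ w : Fin n → A, (∀ j, w j ∈ C) → evalMulti e w = 0)
    (w : Fin n → A) (hw : ∀ j, w j ∈ B ⊔ C) :
    evalMulti e w ∈ B := by
  classical
  choose b hb c hc hbc using fun j => Submodule.mem_sup.mp (hw j)
  obtain rfl : w = b + c := funext fun j => (hbc j).symm
  rw [← evalMultiMultilinearMap_apply, MultilinearMap.map_add_univ]
  refine Submodule.sum_mem _ fun s _ => ?_
  rw [evalMultiMultilinearMap_apply]
  obtain rfl | ⟨j, hj⟩ := s.eq_empty_or_nonempty
  · rw [Finset.piecewise_empty, hgC c hc]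
    exact B.zero_mem
  refine evalMulti_mem e _ fun σ => list_prod_mem_of_exists_mem B hB _ ⟨b j, ?_, hb j⟩
  exact List.mem_ofFn.mpr ⟨σ.symm j, by simp [hj]⟩

end EvalMulti

theorem stmt7_general {F : Type} [Field F] {G : Type} [Group G]
    {A : Type} [Ring A] [Algebra F A] (𝒜 : G → Submodule F A)
    (hmul : ∀ g h : G, ∀ x ∈ 𝒜 g, ∀ y ∈ 𝒜 h, x * y ∈ 𝒜 (g * h))
    (B C : Submodule F A)
    (hBideal : ∀ a : A, ∀ x ∈ B, a * x ∈ B ∧ x * a ∈ B)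
    (hsum : B ⊔ C = ⊤)
    {m n : ℕ} (hn : 0 < n)
    -- the multilinear graded identity `f` of `B`, with coefficients `c` and degrees `d`
    (c : Equiv.Perm (Fin m) → F) (d : Fin m → G)
    (hfB : ∀ v : Fin m → A, (∀ i, v i ∈ B) → (∀ i, v i ∈ 𝒜 (d i)) → evalMulti c v = 0)
    -- the ordinary multilinear identity `g` of `C`, with coefficients `e`
    (e : Equiv.Perm (Fin n) → F)
    (hgC : ∀ w : Fin n → A, (∀ j, w j ∈ C) → evalMulti e w = 0) :
    ∀ w : Fin m → Fin n → A,
      (∀ i, w i ⟨0, hn⟩ ∈ 𝒜 (d i)) →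
      (∀ i (j : Fin n), j ≠ ⟨0, hn⟩ → w i j ∈ 𝒜 (1 : G)) →
      evalMulti c (fun i => evalMulti e (w i)) = 0 := by
  intro w hw₀ hw₁
  refine hfB _ (fun i => ?_) (fun i => ?_)
  · exact evalMulti_mem_of_forall_mem_sup hBideal e hgC (w i) fun j => hsum ▸ Submodule.mem_top
  · exact evalMulti_mem_graded 𝒜 hmul hn e (w i) _ (d i) (hw₀ i) (hw₁ i)

/-- `A` a `G`-graded algebra, `A = B + C` with `B` a homogeneous ideal
satisfying the multilinear graded identity `f(x₁^{(g₁)},…,x_m^{(g_m)})` (coefficients `c`,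
degrees `d`) and `C` a homogeneous subalgebra satisfying the ordinary multilinear identity
`g(x₁,…,x_n)` (coefficients `e`).  Then `A` satisfies the graded identity
`f(g(x₁₁^{(g₁)},x₁₂^{(1)},…,x₁ₙ^{(1)}),…,g(x_{m1}^{(g_m)},x_{m2}^{(1)},…,x_{mn}^{(1)}))`,
where in the `i`-th inner copy of `g` the first variable has degree `gᵢ` and the remaining
`n−1` variables have neutral degree `1`. -/
theorem stmt7 {F : Type} [Field F] {G : Type} [Group G]
    {A : Type} [Ring A] [Algebra F A] (𝒜 : G → Submodule F A)
    (hmul : ∀ g h : G, ∀ x ∈ 𝒜 g, ∀ y ∈ 𝒜 h, x * y ∈ 𝒜 (g * h))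
    (htop : (⨆ g, 𝒜 g) = ⊤) (hindep : iSupIndep 𝒜)
    (B C : Submodule F A)
    (hBideal : ∀ a : A, ∀ x ∈ B, a * x ∈ B ∧ x * a ∈ B)
    (hBhom : B = ⨆ g, B ⊓ 𝒜 g)
    (hCsub : ∀ x ∈ C, ∀ y ∈ C, x * y ∈ C)
    (hChom : C = ⨆ g, C ⊓ 𝒜 g)
    (hsum : B ⊔ C = ⊤)
    {m n : ℕ} (hn : 0 < n)
    -- the multilinear graded identity `f` of `B`, with coefficients `c` and degrees `d`
    (c : Equiv.Perm (Fin m) → F) (d : Fin m → G)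
    (hfB : ∀ v : Fin m → A, (∀ i, v i ∈ B) → (∀ i, v i ∈ 𝒜 (d i)) → evalMulti c v = 0)
    -- the ordinary multilinear identity `g` of `C`, with coefficients `e`
    (e : Equiv.Perm (Fin n) → F)
    (hgC : ∀ w : Fin n → A, (∀ j, w j ∈ C) → evalMulti e w = 0) :
    ∀ w : Fin m → Fin n → A,
      (∀ i, w i ⟨0, hn⟩ ∈ 𝒜 (d i)) →
      (∀ i (j : Fin n), j ≠ ⟨0, hn⟩ → w i j ∈ 𝒜 (1 : G)) →
      evalMulti c (fun i => evalMulti e (w i)) = 0 :=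
  stmt7_general 𝒜 hmul B C hBideal hsum hn c d hfB e hgC
end

section
/- For positive integers n and d, the number of d-good permutations in the symmetric group S_n is at most (d−1)^{2n}. -/
/-!
Attach to each position `i` the length `decLen σ i` of the longest decreasing subsequence
ending just before `i` whose values all exceed `σ i`. If `i < j` and `σ j < σ i` then
`decLen σ i < decLen σ j`, so `σ` is increasing on each level set of `decLen σ`, and it maps
that level set onto the level set of `decLen σ ∘ σ⁻¹`. An increasing bijection between finite
linear orders is unique, so `σ` is determined by the two colourings `decLen σ` and
`decLen σ ∘ σ⁻¹`. For a `d`-good `σ` both take values below `d - 1`.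
-/

/-- `σ ∈ Sₙ` is `d`-bad if it admits a decreasing subsequence of length `d`:
indices `i₁ < ⋯ < i_d` with `σ(i₁) > ⋯ > σ(i_d)`; otherwise `σ` is `d`-good. -/
def IsBadPerm {n : ℕ} (d : ℕ) (σ : Equiv.Perm (Fin n)) : Prop :=
  ∃ s : Fin d → Fin n, StrictMono s ∧ ∀ i j : Fin d, i < j → σ (s j) < σ (s i)

open Finset Function

theorem Equiv.eq_of_strictMonoOn_fibers {α β γ : Type*} [LinearOrder α] [WellFoundedLT α]
    [Preorder β] (σ τ : α ≃ β) (p : α → γ) (q : β → γ)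
    (hσ : ∀ x, q (σ x) = p x) (hτ : ∀ x, q (τ x) = p x)
    (hσ_mono : ∀ k, StrictMonoOn σ (p ⁻¹' {k}))
    (hτ_mono : ∀ k, StrictMonoOn τ (p ⁻¹' {k})) :
    σ = τ := by
  ext x
  have range_eq (e : α ≃ β) (he : ∀ x, q (e x) = p x) :
      Set.range (fun y : p ⁻¹' {p x} => e y) = q ⁻¹' {p x} := by
    ext v
    refine ⟨?_, fun hv => ⟨⟨e.symm v, ?_⟩, e.apply_symm_apply v⟩⟩
    · rintro ⟨y, rfl⟩
      exact (he y).trans y.2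
    · simpa [← he] using hv
  have := ((hσ_mono (p x)).domRestrict.range_inj (hτ_mono (p x)).domRestrict).1
    ((range_eq σ hσ).trans (range_eq τ hτ).symm)
  exact congrFun this ⟨x, rfl⟩

section DecLen

variable {α β : Type*} [LinearOrder α] [Fintype α] [LinearOrder β]

open Classical in
noncomputable def decLen (f : α → β) (i : α) : ℕ :=
  ({s | (∀ x ∈ s, x < i) ∧ StrictAntiOn f ↑(insert i s)} : Finset (Finset α)).sup card

theorem card_le_decLen {f : α → β} {i : α} {s : Finset α} (hs : ∀ x ∈ s, x < i)
    (hf : StrictAntiOn f ↑(insert i s)) : s.card ≤ decLen f i := by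
  classical
  exact le_sup (f := card) (mem_filter.2 ⟨mem_univ _, hs, hf⟩)

theorem exists_card_eq_decLen (f : α → β) (i : α) :
    ∃ s : Finset α,
      (∀ x ∈ s, x < i) ∧ StrictAntiOn f ↑(insert i s) ∧ s.card = decLen f i := by
  classical
  obtain ⟨s, hs, heq⟩ := exists_mem_eq_sup
    ({s | (∀ x ∈ s, x < i) ∧ StrictAntiOn f ↑(insert i s)} : Finset (Finset α))
    ⟨∅, by simp⟩ card
  simp only [mem_filter, mem_univ, true_and] at hs
  exact ⟨s, hs.1, hs.2, by rw [decLen, heq]⟩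

theorem decLen_lt_decLen {f : α → β} {i j : α} (hij : i < j) (hf : f j < f i) :
    decLen f i < decLen f j := by
  obtain ⟨s, hs_lt, hs_anti, hs_card⟩ := exists_card_eq_decLen f i
  have hi : i ∉ s := fun h => (hs_lt i h).false
  have h_lt : ∀ x ∈ insert i s, x < j := by
    simp only [mem_insert, forall_eq_or_imp]
    exact ⟨hij, fun x hx => (hs_lt x hx).trans hij⟩
  have h_anti : StrictAntiOn f ↑(insert j (insert i s)) := by
    rw [coe_insert, strictAntiOn_insert_iff_of_forall_le fun x hx => (h_lt x hx).le]
    refine ⟨fun x hx _ => ?_, hs_anti⟩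
    rcases mem_insert.1 hx with rfl | hx
    · exact hf
    · exact hf.trans (hs_anti (by simp [hx]) (by simp) (hs_lt x hx))
  have := card_le_decLen h_lt h_anti
  rw [card_insert_of_notMem hi] at this
  omega

theorem strictMonoOn_decLen_fiber {f : α → β} (hf : Injective f) (k : ℕ) :
    StrictMonoOn f (decLen f ⁻¹' {k}) := by
  intro i hi j hj hij
  exact lt_of_le_of_ne (not_lt.1 fun h => (decLen_lt_decLen hij h).ne (hi.trans hj.symm))
    (hf.ne hij.ne)

theorem Equiv.eq_of_decLen_eq (σ τ : α ≃ β) (h_pos : decLen σ = decLen τ)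
    (h_val : decLen σ ∘ σ.symm = decLen τ ∘ τ.symm) : σ = τ := by
  refine σ.eq_of_strictMonoOn_fibers τ (decLen σ) (decLen σ ∘ σ.symm) (by simp)
    (fun x => by simpa [h_pos] using congrFun h_val (τ x))
    (strictMonoOn_decLen_fiber σ.injective) ?_
  simpa [h_pos] using strictMonoOn_decLen_fiber τ.injective

end DecLen

theorem isBadPerm_of_strictAntiOn {n d : ℕ} {σ : Equiv.Perm (Fin n)} {s : Finset (Fin n)}
    (hs : StrictAntiOn σ ↑s) (hd : d ≤ s.card) : IsBadPerm d σ := by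
  refine ⟨fun k => s.orderEmbOfFin rfl (Fin.castLE hd k),
    (s.orderEmbOfFin rfl).strictMono.comp (Fin.strictMono_castLE hd), fun k l hkl => ?_⟩
  exact hs (s.orderEmbOfFin_mem rfl _) (s.orderEmbOfFin_mem rfl _)
    ((s.orderEmbOfFin rfl).strictMono (Fin.strictMono_castLE hd hkl))

theorem decLen_lt_of_not_isBadPerm {n d : ℕ} {σ : Equiv.Perm (Fin n)} (hσ : ¬ IsBadPerm d σ)
    (i : Fin n) : decLen σ i < d - 1 := by
  obtain ⟨s, hs_lt, hs_anti, hs_card⟩ := exists_card_eq_decLen σ i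
  have hi : i ∉ s := fun h => (hs_lt i h).false
  have : (insert i s).card < d := not_le.1 fun hd => hσ (isBadPerm_of_strictAntiOn hs_anti hd)
  rw [card_insert_of_notMem hi] at this
  omega

theorem stmt13_general (n d : ℕ) :
    Nat.card {σ : Equiv.Perm (Fin n) // ¬ IsBadPerm d σ} ≤ (d - 1) ^ (2 * n) := by
  let colourings (σ : {σ : Equiv.Perm (Fin n) // ¬ IsBadPerm d σ}) :
      (Fin n → Fin (d - 1)) × (Fin n → Fin (d - 1)) :=
    (fun i => ⟨decLen σ.1 i, decLen_lt_of_not_isBadPerm σ.2 i⟩,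
     fun v => ⟨decLen σ.1 (σ.1.symm v), decLen_lt_of_not_isBadPerm σ.2 _⟩)
  have h_inj : Injective colourings := by
    rintro ⟨σ, _⟩ ⟨τ, _⟩ h
    simp only [colourings, Prod.mk.injEq, funext_iff, Fin.ext_iff] at h
    exact Subtype.ext (Equiv.eq_of_decLen_eq σ τ (funext h.1) (funext h.2))
  calc Nat.card {σ : Equiv.Perm (Fin n) // ¬ IsBadPerm d σ}
      ≤ Nat.card ((Fin n → Fin (d - 1)) × (Fin n → Fin (d - 1))) :=
        Nat.card_le_card_of_injective colourings h_inj
    _ = (d - 1) ^ (2 * n) := by simp [two_mul, pow_add]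

/-- for positive integers `n` and `d`, the number of `d`-good permutations in
the symmetric group `Sₙ` is at most `(d−1)^{2n}`. -/
theorem stmt13 (n d : ℕ) (hn : 0 < n) (hd : 0 < d) :
    Nat.card {σ : Equiv.Perm (Fin n) // ¬ IsBadPerm d σ} ≤ (d - 1) ^ (2 * n) :=
  stmt13_general n d
end
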